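/- Let G be a simple graph, v a vertex, r ≥ 1 an integer, and c a vertex with c ≠ v and ¬G.Adj c v. Then g_{c,v}^{(r)}(G) ≤ dist_G(c,v) + 1 in ℕ∞; equivalently, the r-edge local girth of c with respect to v is at most the infimum of the lengths of cycles of G+(c,v) containing the edge {c,v}. -/

import Mathlib

open SimpleGraph

variable {V : Type*}

/-- `G + (c,v)`: the graph obtained from `G` by adding the edge `{c, v}`. -/
def addEdge (G : SimpleGraph V) (c v : V) : SimpleGraph V :=
  G ⊔ SimpleGraph.fromEdgeSet {s(c, v)}

/-- The local girth of a vertex `v`: the infimum (in `ℕ∞`) of the lengths of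
cycles of `G` passing through `v`. -/
noncomputable def localGirth (G : SimpleGraph V) (v : V) : ℕ∞ :=
  ⨅ (a : V) (w : G.Walk a a) (_ : w.IsCycle) (_ : v ∈ w.support), (w.length : ℕ∞)

/-- The edge local girth of `e`: the infimum (in `ℕ∞`) of the lengths of
cycles of `G` containing the edge `e`. -/
noncomputable def edgeLocalGirth (G : SimpleGraph V) (e : Sym2 V) : ℕ∞ :=
  ⨅ (a : V) (w : G.Walk a a) (_ : w.IsCycle) (_ : e ∈ w.edges), (w.length : ℕ∞)

/-- A length-`r` valid sequence for `v` in `G`: pairwise distinct vertices,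
each distinct from `v` and not adjacent to `v` in `G`. -/
def ValidSeq (G : SimpleGraph V) (v : V) {r : ℕ} (s : Fin r → V) : Prop :=
  Function.Injective s ∧ ∀ i, s i ≠ v ∧ ¬ G.Adj (s i) v

/-- The graph sequence of a sequence `s`: `graphSeq G v s 0 = G₁ = G` and
`graphSeq G v s i = G_{i+1} = G_i + (s_i, v)`. -/
def graphSeq (G : SimpleGraph V) (v : V) {r : ℕ} (s : Fin r → V) : ℕ → SimpleGraph V
  | 0 => G
  | i + 1 => if h : i < r then addEdge (graphSeq G v s i) (s ⟨i, h⟩) v else graphSeq G v s i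

/-- The `r`-edge local girth of `v` in `G`: the supremum, over all length-`r`
valid sequences `s` for `v`, of the local girth of `v` in the final graph. -/
noncomputable def multiEdgeLocalGirth (G : SimpleGraph V) (v : V) (r : ℕ) : ℕ∞ :=
  ⨆ (s : Fin r → V) (_ : ValidSeq G v s), localGirth (graphSeq G v s r) v

/-- The `r`-edge local girth of `c` with respect to `v`:
`g_v(G+(c,v))` if `r = 1`, and `g_v^{(r-1)}(G+(c,v))` if `r ≥ 2`. -/
noncomputable def cnMultiEdgeLocalGirth (G : SimpleGraph V) (c v : V) (r : ℕ) : ℕ∞ :=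
  if r = 1 then localGirth (addEdge G c v) v
  else multiEdgeLocalGirth (addEdge G c v) v (r - 1)

/-!
Adding the edges `{s_i, v}` can only create new cycles through `v`, so every quantity
`g_{c,v}^{(r)}(G)` is at most `g_v(G+(c,v))`, which is at most the length of any cycle through the
new edge `{c,v}`. A shortest `c`–`v` path of `G` avoids that edge (it is not an edge of `G`), so
closing it up with `{c,v}` gives such a cycle, of length `dist_G(c,v) + 1`.
-/

lemma localGirth_le_length {G : SimpleGraph V} {a v : V} {w : G.Walk a a} (hw : w.IsCycle)
    (hv : v ∈ w.support) : localGirth G v ≤ w.length :=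
  iInf₂_le_of_le a w <| iInf₂_le hw hv

lemma edgeLocalGirth_le_length {G : SimpleGraph V} {a : V} {e : Sym2 V} {w : G.Walk a a}
    (hw : w.IsCycle) (he : e ∈ w.edges) : edgeLocalGirth G e ≤ w.length :=
  iInf₂_le_of_le a w <| iInf₂_le hw he

lemma localGirth_anti {G H : SimpleGraph V} (h : G ≤ H) (v : V) :
    localGirth H v ≤ localGirth G v :=
  le_iInf₂ fun _ w => le_iInf₂ fun hw hv => by
    simpa using localGirth_le_length (hw.mapLe h) (by rwa [Walk.support_mapLe_eq_support])

lemma localGirth_le_edgeLocalGirth (G : SimpleGraph V) (c v : V) :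
    localGirth G v ≤ edgeLocalGirth G s(c, v) :=
  le_iInf₂ fun _ w => le_iInf₂ fun hw he =>
    localGirth_le_length hw (w.snd_mem_support_of_mem_edges he)

lemma edgeLocalGirth_le_length_add_one {G : SimpleGraph V} {c v : V} (h : G.Adj c v)
    {p : G.Walk v c} (hp : p.IsPath) (he : s(c, v) ∉ p.edges) :
    edgeLocalGirth G s(c, v) ≤ p.length + 1 := by
  simpa using edgeLocalGirth_le_length ((Walk.cons_isCycle_iff p h).mpr ⟨hp, he⟩)
    (Walk.edges_cons h p ▸ List.mem_cons_self)

lemma le_addEdge (G : SimpleGraph V) (c v : V) : G ≤ addEdge G c v :=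
  le_sup_left

lemma addEdge_adj {G : SimpleGraph V} {c v : V} (hne : c ≠ v) : (addEdge G c v).Adj c v := by
  simp [addEdge, hne]

lemma le_graphSeq (G : SimpleGraph V) (v : V) {r : ℕ} (s : Fin r → V) (i : ℕ) :
    G ≤ graphSeq G v s i := by
  induction i with
  | zero => exact le_rfl
  | succ i ih =>
    rw [graphSeq]
    split
    · exact ih.trans (le_addEdge _ _ _)
    · exact ih

lemma multiEdgeLocalGirth_le_localGirth (G : SimpleGraph V) (v : V) (r : ℕ) :
    multiEdgeLocalGirth G v r ≤ localGirth G v :=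
  iSup₂_le fun s _ => localGirth_anti (le_graphSeq G v s r) v

lemma cnMultiEdgeLocalGirth_le_localGirth (G : SimpleGraph V) (c v : V) (r : ℕ) :
    cnMultiEdgeLocalGirth G c v r ≤ localGirth (addEdge G c v) v := by
  unfold cnMultiEdgeLocalGirth
  split
  · exact le_rfl
  · exact multiEdgeLocalGirth_le_localGirth _ _ _

lemma edgeLocalGirth_addEdge_le_edist_add_one {G : SimpleGraph V} {c v : V} (hne : c ≠ v)
    (hadj : ¬ G.Adj c v) : edgeLocalGirth (addEdge G c v) s(c, v) ≤ G.edist c v + 1 := by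
  by_cases hreach : G.Reachable v c
  · obtain ⟨p, hp, hlen⟩ := hreach.exists_path_of_dist
    have hp' : (p.mapLe (le_addEdge G c v)).IsPath := hp.mapLe _
    have he : s(c, v) ∉ (p.mapLe (le_addEdge G c v)).edges := by
      rw [Walk.edges_mapLe_eq_edges]
      exact fun h => hadj (p.adj_of_mem_edges h)
    calc edgeLocalGirth (addEdge G c v) s(c, v)
        ≤ (p.mapLe (le_addEdge G c v)).length + 1 :=
          edgeLocalGirth_le_length_add_one (addEdge_adj hne) hp' he
      _ = G.edist c v + 1 := by
          rw [Walk.length_mapLe, hlen, hreach.coe_dist_eq_edist, edist_comm]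
  · rw [edist_comm, edist_eq_top_of_not_reachable hreach, top_add]
    exact le_top

theorem stmt_8_general (G : SimpleGraph V) (v : V) {r : ℕ}
    (c : V) (hne : c ≠ v) (hadj : ¬ G.Adj c v) :
    cnMultiEdgeLocalGirth G c v r ≤ G.edist c v + 1 ∧
    cnMultiEdgeLocalGirth G c v r ≤ edgeLocalGirth (addEdge G c v) s(c, v) := by
  have hedge : cnMultiEdgeLocalGirth G c v r ≤ edgeLocalGirth (addEdge G c v) s(c, v) :=
    (cnMultiEdgeLocalGirth_le_localGirth G c v r).trans (localGirth_le_edgeLocalGirth _ c v)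
  exact ⟨hedge.trans (edgeLocalGirth_addEdge_le_edist_add_one hne hadj), hedge⟩

/-- For `r ≥ 1` and `c ≠ v` not adjacent to `v` in `G`,
`g_{c,v}^{(r)}(G) ≤ dist_G(c,v) + 1`; equivalently, it is at most the infimum of the
lengths of cycles of `G+(c,v)` containing the edge `{c,v}`. -/
theorem stmt_8 (G : SimpleGraph V) (v : V) {r : ℕ} (hr : 1 ≤ r)
    (c : V) (hne : c ≠ v) (hadj : ¬ G.Adj c v) :
    cnMultiEdgeLocalGirth G c v r ≤ G.edist c v + 1 ∧
    cnMultiEdgeLocalGirth G c v r ≤ edgeLocalGirth (addEdge G c v) s(c, v) :=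
  stmt_8_general G v c hne hadj
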